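/- Let (A(n))_{n∈ℕ} be a sequence of invertible d×d real matrices, let e ∈ ℝ^d have all coordinates positive and w ∈ ℝ^d be nonzero, such that the normalized products (A(n) ⋯ A(1) A(0)) / ‖A(n) ⋯ A(1) A(0)‖ converge to the rank-one matrix e wᵀ as n → ∞ (Frobenius norm). Let U_0 ∈ ℝ^d satisfy wᵀ U_0 > 0, define U_{n+1} = A(n) U_n, and let T be an invertible d×d real matrix such that v := T e has all coordinates positive. Then there exists N such that for all n ≥ N the vector T U_n has all coordinates positive, and d_H(T U_n, v) → 0 as n → ∞. -/

import Mathlib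

open Matrix Filter

/-- The product `A(n) A(n−1) ⋯ A(1) A(0)` of the first terms of a sequence of
matrices. -/
def prodSeq {d : ℕ} (A : ℕ → Matrix (Fin d) (Fin d) ℝ) : ℕ → Matrix (Fin d) (Fin d) ℝ
  | 0 => A 0
  | n + 1 => A (n + 1) * prodSeq A n

/-- The Frobenius norm of a real matrix. -/
noncomputable def frobNorm {d : ℕ} (M : Matrix (Fin d) (Fin d) ℝ) : ℝ :=
  Real.sqrt (∑ i, ∑ j, (M i j) ^ 2)

/-- Hilbert's pseudo-metric on the positive orthant of `ℝ^d`: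
`d_H(x, y) = log( max_i (x_i / y_i) / min_i (x_i / y_i) )`. -/
noncomputable def hilbertDist {d : ℕ} (x y : Fin d → ℝ) : ℝ :=
  Real.log ((⨆ i, x i / y i) / (⨅ i, x i / y i))

/-!
Since `U (n + 1) = prodSeq A n *ᵥ U 0`, the normalized vectors `T U_{n+1} / ‖A(n) ⋯ A(0)‖`
converge to `T (e wᵀ) U_0 = (wᵀ U_0) v`, a positive multiple of `v`. Positivity of the limit
gives eventual positivity of `T U_n`, and the Hilbert distance to `v` is invariant under positive
rescaling of its first argument and tends to `0` along any sequence converging to a nonzero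
multiple of `v`.
-/

open scoped Topology

namespace Filter.Tendsto

variable {α ι L : Type*} [Fintype ι] [Nonempty ι] [ConditionallyCompleteLattice L]
  [TopologicalSpace L] {l : Filter α} {f : α → ι → L} {g : ι → L}

theorem ciSup_nhds_apply [ContinuousSup L] (hf : ∀ i, Tendsto (f · i) l (𝓝 (g i))) :
    Tendsto (fun a => ⨆ i, f a i) l (𝓝 (⨆ i, g i)) := by
  simpa only [← Finset.sup'_univ_eq_ciSup] using
    finset_sup'_nhds_apply (f := fun i a => f a i) Finset.univ_nonempty fun i _ => hf i

theorem ciInf_nhds_apply [ContinuousInf L] (hf : ∀ i, Tendsto (f · i) l (𝓝 (g i))) :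
    Tendsto (fun a => ⨅ i, f a i) l (𝓝 (⨅ i, g i)) := by
  simpa only [← Finset.inf'_univ_eq_ciInf] using
    finset_inf'_nhds_apply (f := fun i a => f a i) Finset.univ_nonempty fun i _ => hf i

end Filter.Tendsto

theorem hilbertDist_smul_left {d : ℕ} {a : ℝ} (ha : 0 < a) (x y : Fin d → ℝ) :
    hilbertDist (a • x) y = hilbertDist x y := by
  simp only [hilbertDist, Pi.smul_apply, smul_eq_mul, mul_div_assoc,
    ← Real.mul_iSup_of_nonneg ha.le, ← Real.mul_iInf_of_nonneg ha.le,
    mul_div_mul_left _ _ ha.ne']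

theorem tendsto_hilbertDist_zero {α : Type*} {d : ℕ} [NeZero d] {l : Filter α}
    {x : α → Fin d → ℝ} {c : ℝ} {v : Fin d → ℝ} (hx : Tendsto x l (𝓝 (c • v))) (hc : c ≠ 0)
    (hv : ∀ i, v i ≠ 0) : Tendsto (fun a => hilbertDist (x a) v) l (𝓝 0) := by
  have hratio : ∀ i, Tendsto (fun a => x a i / v i) l (𝓝 c) := fun i => by
    simpa [mul_div_assoc, hv i] using (tendsto_pi_nhds.1 hx i).div_const (v i)
  have hsup := Tendsto.ciSup_nhds_apply hratio
  have hinf := Tendsto.ciInf_nhds_apply hratio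
  simp only [ciSup_const, ciInf_const] at hsup hinf
  simpa [hilbertDist, hc] using (hsup.div hinf hc).log (by simpa using hc)

theorem pos_of_inv_mul_pos {r a : ℝ} (hr : 0 ≤ r) (h : 0 < r⁻¹ * a) : 0 < r ∧ 0 < a :=
  ((pos_and_pos_or_neg_and_neg_of_mul_pos h).resolve_right fun h => by
    linarith [inv_nonneg.2 hr]).imp_left inv_pos.1

theorem eventually_pos_and_tendsto_hilbertDist {α : Type*} {d : ℕ} [NeZero d] {l : Filter α}
    {x : α → Fin d → ℝ} {r : α → ℝ} {c : ℝ} {v : Fin d → ℝ} (hr : ∀ a, 0 ≤ r a) (hc : 0 < c)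
    (hv : ∀ i, 0 < v i) (hx : Tendsto (fun a => (r a)⁻¹ • x a) l (𝓝 (c • v))) :
    (∀ᶠ a in l, ∀ i, 0 < x a i) ∧ Tendsto (fun a => hilbertDist (x a) v) l (𝓝 0) := by
  have hev : ∀ᶠ a in l, ∀ i, 0 < r a ∧ 0 < x a i := eventually_all.2 fun i =>
    ((tendsto_pi_nhds.1 hx i).eventually (eventually_gt_nhds (mul_pos hc (hv i)))).mono
      fun a ha => pos_of_inv_mul_pos (hr a) ha
  refine ⟨hev.mono fun a ha i => (ha i).2, ?_⟩
  refine (tendsto_hilbertDist_zero hx hc.ne' fun i => (hv i).ne').congr' ?_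
  filter_upwards [hev] with a ha
  exact hilbertDist_smul_left (inv_pos.2 (ha 0).1) (x a) v

theorem prodSeq_mulVec {d : ℕ} {A : ℕ → Matrix (Fin d) (Fin d) ℝ} {U : ℕ → Fin d → ℝ}
    (hU : ∀ n, U (n + 1) = A n *ᵥ U n) (n : ℕ) : U (n + 1) = prodSeq A n *ᵥ U 0 := by
  induction n with
  | zero => exact hU 0
  | succ n ih => rw [hU, ih, prodSeq, mulVec_mulVec]

theorem generic_hilbertDist_tendsto_zero_general {d : ℕ} (hd : 1 ≤ d)
    (A : ℕ → Matrix (Fin d) (Fin d) ℝ)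
    (e w : Fin d → ℝ)
    (hconv : ∀ i j, Tendsto (fun n => prodSeq A n i j / frobNorm (prodSeq A n))
      atTop (nhds (e i * w j)))
    (U : ℕ → Fin d → ℝ) (hU0 : 0 < ∑ i, w i * U 0 i)
    (hU : ∀ n, U (n + 1) = (A n).mulVec (U n))
    (T : Matrix (Fin d) (Fin d) ℝ)
    (hv : ∀ i, 0 < T.mulVec e i) :
    (∃ N : ℕ, ∀ n ≥ N, ∀ i, 0 < T.mulVec (U n) i) ∧
    Tendsto (fun n => hilbertDist (T.mulVec (U n)) (T.mulVec e)) atTop (nhds 0) := by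
  have : NeZero d := ⟨by omega⟩
  have hprod : Tendsto (fun n => (frobNorm (prodSeq A n))⁻¹ • prodSeq A n) atTop
      (𝓝 (vecMulVec e w)) :=
    tendsto_pi_nhds.2 fun i => tendsto_pi_nhds.2 fun j => by
      simpa [div_eq_inv_mul, vecMulVec] using hconv i j
  have horbit : Tendsto (fun n => (frobNorm (prodSeq A n))⁻¹ • T *ᵥ U (n + 1)) atTop
      (𝓝 ((w ⬝ᵥ U 0) • T *ᵥ e)) := by
    have hcont : Continuous fun M : Matrix (Fin d) (Fin d) ℝ => T *ᵥ (M *ᵥ U 0) :=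
      continuous_const.matrix_mulVec (continuous_id.matrix_mulVec continuous_const)
    simpa only [Function.comp_def, smul_mulVec, mulVec_smul, vecMulVec_mulVec, op_smul_eq_smul,
      ← prodSeq_mulVec hU] using (hcont.tendsto _).comp hprod
  obtain ⟨hpos, hdist⟩ := eventually_pos_and_tendsto_hilbertDist
    (fun _ => Real.sqrt_nonneg _) hU0 hv horbit
  refine ⟨eventually_atTop.1 ?_, (tendsto_add_atTop_iff_nat 1).1 hdist⟩
  rwa [← map_add_atTop_eq_nat 1]

/-- If the normalized products of invertible matrices `A(n)` converge to
`e wᵀ` with `e > 0`, `w ≠ 0`, and `U_0` is generic (`wᵀ U_0 > 0`), then for any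
invertible `T` such that `v = T e > 0`, the vectors `T U_n` are eventually
positive and `d_H(T U_n, v) → 0`. -/
theorem generic_hilbertDist_tendsto_zero {d : ℕ} (hd : 1 ≤ d)
    (A : ℕ → Matrix (Fin d) (Fin d) ℝ) (hinv : ∀ n, IsUnit (A n))
    (e w : Fin d → ℝ) (he : ∀ i, 0 < e i) (hw : w ≠ 0)
    (hconv : ∀ i j, Tendsto (fun n => prodSeq A n i j / frobNorm (prodSeq A n))
      atTop (nhds (e i * w j)))
    (U : ℕ → Fin d → ℝ) (hU0 : 0 < ∑ i, w i * U 0 i)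
    (hU : ∀ n, U (n + 1) = (A n).mulVec (U n))
    (T : Matrix (Fin d) (Fin d) ℝ) (hT : IsUnit T)
    (hv : ∀ i, 0 < T.mulVec e i) :
    (∃ N : ℕ, ∀ n ≥ N, ∀ i, 0 < T.mulVec (U n) i) ∧
    Tendsto (fun n => hilbertDist (T.mulVec (U n)) (T.mulVec e)) atTop (nhds 0) :=
  generic_hilbertDist_tendsto_zero_general hd A e w hconv U hU0 hU T hv
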